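/- Let s < 0. There exists c > 0 such that for every real A ≥ 2, every integer N ≥ 10A, every R > 0, and every t ≥ 0 the following holds. Let φ(x) = R Σ_{n∈S} e^{2πinx} where S = {n ∈ ℤ : |n − N| ≤ A/2 or |n − 2N| ≤ A/2}, and let Ξ_1(t) = it |φ|² φ. Then (Σ_{n∈ℤ, |n|<N} (1+n²)^s |\widehat{Ξ_1(t)}(n)|²)^{1/2} ≥ c t R³ A² · f(A), where f(A) = 1 if s < −1/2, f(A) = (log A)^{1/2} if s = −1/2, and f(A) = A^{1/2+s} if −1/2 < s < 0. -/

import Mathlib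

open scoped Real

/-- Fourier coefficient of a 1-periodic function `f : ℝ → ℂ`:
`f̂(n) = ∫₀¹ f(x) e^{−2πinx} dx`. -/
noncomputable def fourierCoeff1 (f : ℝ → ℂ) (n : ℤ) : ℂ :=
  ∫ x in (0:ℝ)..1, f x * Complex.exp (-2 * (π : ℂ) * Complex.I * (n : ℂ) * (x : ℂ))

/-- `φ(x) = R Σ_{n∈S} e^{2πinx}` where
`S = {n ∈ ℤ : |n − N| ≤ A/2 or |n − 2N| ≤ A/2}`. -/
noncomputable def phiPacket (R A N : ℝ) (x : ℝ) : ℂ :=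
  (R : ℂ) * ∑' n : ℤ,
    if |(n:ℝ) - N| ≤ A/2 ∨ |(n:ℝ) - 2*N| ≤ A/2
      then Complex.exp (2 * (π : ℂ) * Complex.I * (n : ℂ) * (x : ℂ)) else 0

/-! The `n`-th Fourier coefficient of `Ξ₁(t) = it φ φ̄ φ` is `i t R³` times the number of
triples `(n₁, n₂, n₃) ∈ S³` with `n₁ - n₂ + n₃ = n`. For `|n| ≤ B := ⌊A/4⌋` there are at least
`(B + 1)²` of them: `n₁ ∈ [N, N + B]`, `n₂ ∈ [2N, 2N + B]` and `n₃ = n - n₁ + n₂`, which lies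
within `2B ≤ A/2` of `N`. Hence the low-frequency norm is at least
`t R³ (B + 1)² (∑_{0 ≤ k ≤ B} (1 + k²)^s)^{1/2}`, and the weight sum is bounded below by `1`,
`log (B + 2) ≥ (log A)/2` and `(B + 1)^{1+2s} ≥ (A/4)^{1+2s}` in the three regimes of `s`. -/

open Finset Complex ComplexConjugate

noncomputable def expMode (n : ℤ) (x : ℝ) : ℂ := exp (2 * π * I * n * x)

lemma expMode_add (m n : ℤ) (x : ℝ) : expMode (m + n) x = expMode m x * expMode n x := by
  simp only [expMode, ← Complex.exp_add]
  push_cast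
  ring_nf

lemma conj_expMode (n : ℤ) (x : ℝ) : conj (expMode n x) = expMode (-n) x := by
  rw [expMode, expMode, ← Complex.exp_conj]
  congr 1
  simp only [map_mul, conj_ofReal, conj_I, map_ofNat, map_intCast]
  push_cast
  ring

@[fun_prop]
lemma continuous_expMode (n : ℤ) : Continuous (expMode n) := by
  unfold expMode; fun_prop

lemma integral_expMode (n : ℤ) : ∫ x in (0:ℝ)..1, expMode n x = if n = 0 then 1 else 0 := by
  split_ifs with hn
  · simp [expMode, hn]
  · have hc : 2 * π * I * n ≠ 0 := by simp [Real.pi_ne_zero, I_ne_zero, hn]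
    simp only [expMode, integral_exp_mul_complex hc, mul_one, ofReal_one, ofReal_zero,
      mul_zero, Complex.exp_zero]
    rw [show 2 * π * I * n = n * (2 * π * I) by ring, exp_int_mul_two_pi_mul_I, sub_self,
      zero_div]

lemma fourierCoeff1_expMode (n m : ℤ) :
    fourierCoeff1 (expMode n) m = if n = m then 1 else 0 := by
  have h : ∀ x : ℝ, expMode n x * exp (-2 * π * I * m * x) = expMode (n - m) x := by
    intro x
    rw [sub_eq_add_neg, expMode_add]
    simp only [expMode]
    push_cast
    ring_nf
  simp only [fourierCoeff1, h, integral_expMode, sub_eq_zero]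

lemma fourierCoeff1_const_mul_sum_expMode {ι : Type*} (c : ℂ) (s : Finset ι) (k : ι → ℤ)
    (m : ℤ) :
    fourierCoeff1 (fun x => c * ∑ a ∈ s, expMode (k a) x) m = c * #{a ∈ s | k a = m} := by
  have hint : ∀ a ∈ s, IntervalIntegrable
      (fun x : ℝ => c * expMode (k a) x * exp (-2 * π * I * m * x)) MeasureTheory.volume 0 1 :=
    fun a _ => Continuous.intervalIntegrable (by fun_prop) 0 1
  calc fourierCoeff1 (fun x => c * ∑ a ∈ s, expMode (k a) x) m
      = ∑ a ∈ s, c * fourierCoeff1 (expMode (k a)) m := by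
        simp only [fourierCoeff1, Finset.mul_sum, Finset.sum_mul]
        rw [intervalIntegral.integral_finsetSum hint]
        refine Finset.sum_congr rfl fun a _ => ?_
        rw [← intervalIntegral.integral_const_mul]
        simp only [mul_assoc]
    _ = c * #{a ∈ s | k a = m} := by
        simp only [fourierCoeff1_expMode, ← Finset.mul_sum, Finset.sum_boole]

lemma norm_sq_mul_sum_expMode (S : Finset ℤ) (x : ℝ) :
    ((‖∑ n ∈ S, expMode n x‖ ^ 2 : ℝ) : ℂ) * ∑ n ∈ S, expMode n x
      = ∑ p ∈ S ×ˢ S ×ˢ S, expMode (p.1 - p.2.1 + p.2.2) x := by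
  rw [← Complex.normSq_eq_norm_sq, ← Complex.mul_conj, map_sum]
  rw [Finset.sum_mul_sum, Finset.sum_mul]
  simp only [Finset.sum_mul_sum, Finset.sum_product, conj_expMode,
    sub_eq_add_neg, expMode_add]

def tripleCount (S : Finset ℤ) (m : ℤ) : ℕ := #{p ∈ S ×ˢ S ×ˢ S | p.1 - p.2.1 + p.2.2 = m}

noncomputable def packetSupport (A N : ℝ) : Finset ℤ :=
  Icc ⌈N - A / 2⌉ ⌊N + A / 2⌋ ∪ Icc ⌈2 * N - A / 2⌉ ⌊2 * N + A / 2⌋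

lemma mem_packetSupport {A N : ℝ} {n : ℤ} :
    n ∈ packetSupport A N ↔ |(n:ℝ) - N| ≤ A / 2 ∨ |(n:ℝ) - 2 * N| ≤ A / 2 := by
  simp only [packetSupport, Finset.mem_union, Finset.mem_Icc, Int.ceil_le, Int.le_floor,
    abs_sub_le_iff]
  constructor <;> rintro (h | h) <;> [left; right; left; right] <;>
    constructor <;> linarith [h.1, h.2]

lemma phiPacket_eq (R A N x : ℝ) :
    phiPacket R A N x = R * ∑ n ∈ packetSupport A N, expMode n x := by
  rw [phiPacket,
    tsum_eq_sum (s := packetSupport A N) fun n hn => if_neg (mt mem_packetSupport.2 hn)]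
  exact congrArg _ (Finset.sum_congr rfl fun n hn => if_pos (mem_packetSupport.1 hn))

lemma fourierCoeff1_cubic_phiPacket (R A N t : ℝ) (m : ℤ) :
    fourierCoeff1 (fun x => I * t * ((‖phiPacket R A N x‖ ^ 2 : ℝ) : ℂ) * phiPacket R A N x) m
      = I * t * R ^ 3 * tripleCount (packetSupport A N) m := by
  have h : ∀ x, I * t * ((‖phiPacket R A N x‖ ^ 2 : ℝ) : ℂ) * phiPacket R A N x
      = I * t * R ^ 3 * ∑ p ∈ packetSupport A N ×ˢ packetSupport A N ×ˢ packetSupport A N,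
          expMode (p.1 - p.2.1 + p.2.2) x := by
    intro x
    rw [phiPacket_eq, ← norm_sq_mul_sum_expMode, norm_mul, Complex.norm_real,
      Real.norm_eq_abs, mul_pow, sq_abs]
    push_cast
    ring
  simp only [h, fourierCoeff1_const_mul_sum_expMode, tripleCount]

lemma card_mul_card_le_tripleCount {S T U : Finset ℤ} {m : ℤ} (hT : T ⊆ S) (hU : U ⊆ S)
    (hTU : ∀ i ∈ T, ∀ j ∈ U, m - i + j ∈ S) : #T * #U ≤ tripleCount S m := by
  rw [← Finset.card_product, tripleCount]
  refine Finset.card_le_card_of_injOn (fun q => (q.1, q.2, m - q.1 + q.2)) ?_ ?_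
  · rintro ⟨i, j⟩ hij
    simp only [Finset.coe_product, Set.mem_prod, Finset.mem_coe] at hij
    simp only [Finset.coe_filter, Set.mem_ofPred_eq, Finset.mem_product]
    exact ⟨⟨hT hij.1, hU hij.2, hTU i hij.1 j hij.2⟩, by ring⟩
  · rintro ⟨i, j⟩ - ⟨i', j'⟩ - h
    simp only [Prod.mk.injEq] at h
    rw [h.1, h.2.1]

lemma sq_le_tripleCount_packetSupport {A : ℝ} {N m : ℤ} {B : ℕ} (hBA : 4 * (B:ℝ) ≤ A)
    (hm : |m| ≤ B) : (B + 1) ^ 2 ≤ tripleCount (packetSupport A N) m := by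
  have hm' := abs_le.1 (show |(m:ℝ)| ≤ B by exact_mod_cast hm)
  have hnear : ∀ {c n : ℤ}, n ∈ Icc c (c + B) → 0 ≤ (n:ℝ) - c ∧ (n:ℝ) - c ≤ B := by
    intro c n hn
    obtain ⟨h1, h2⟩ := Finset.mem_Icc.1 hn
    constructor
    · linarith [(Int.cast_le (R := ℝ)).2 h1]
    · linarith [show (n:ℝ) ≤ c + B by exact_mod_cast h2]
  have hT : Icc N (N + B) ⊆ packetSupport A N := fun i hi => by
    have := hnear hi
    exact mem_packetSupport.2 (Or.inl (abs_le.2 ⟨by linarith, by linarith⟩))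
  have hU : Icc (2 * N) (2 * N + B) ⊆ packetSupport A N := fun j hj => by
    have := hnear hj
    push_cast at this
    exact mem_packetSupport.2 (Or.inr (abs_le.2 ⟨by linarith, by linarith⟩))
  have hTU : ∀ i ∈ Icc N (N + B), ∀ j ∈ Icc (2 * N) (2 * N + B), m - i + j ∈ packetSupport A N :=
    fun i hi j hj => by
      have hi' := hnear hi
      have hj' := hnear hj
      push_cast at hj'
      refine mem_packetSupport.2 (Or.inl (abs_le.2 ?_))
      push_cast
      constructor <;> linarith
  have hcard : ∀ c : ℤ, #(Icc c (c + B)) = B + 1 := fun c => by rw [Int.card_Icc]; omega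
  simpa only [hcard, sq] using card_mul_card_le_tripleCount hT hU hTU

lemma le_norm_fourierCoeff1_cubic_phiPacket {A R t : ℝ} (hR : 0 ≤ R) (ht : 0 ≤ t) {N m : ℤ}
    {B : ℕ} (hBA : 4 * (B:ℝ) ≤ A) (hm : |m| ≤ B) :
    t * R ^ 3 * (B + 1) ^ 2 ≤ ‖fourierCoeff1
      (fun x => I * t * ((‖phiPacket R A N x‖ ^ 2 : ℝ) : ℂ) * phiPacket R A N x) m‖ := by
  rw [fourierCoeff1_cubic_phiPacket]
  simp only [norm_mul, norm_I, norm_real, Real.norm_eq_abs, norm_pow, RCLike.norm_natCast,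
    abs_of_nonneg ht, abs_of_nonneg hR, one_mul]
  gcongr
  exact_mod_cast sq_le_tripleCount_packetSupport hBA hm

lemma one_le_sum_range_rpow (s : ℝ) (B : ℕ) : 1 ≤ ∑ k ∈ range (B + 1), (1 + (k:ℝ) ^ 2) ^ s := by
  refine le_trans (by simp) (Finset.single_le_sum (f := fun k : ℕ => (1 + (k:ℝ) ^ 2) ^ s)
    (fun k _ => by positivity) (Finset.mem_range.2 B.succ_pos))

lemma log_le_sum_range_rpow_neg_half (B : ℕ) :
    Real.log (B + 2) ≤ ∑ k ∈ range (B + 1), (1 + (k:ℝ) ^ 2) ^ (-(1/2) : ℝ) := by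
  have hH := log_add_one_le_harmonic (B + 1)
  simp only [harmonic, Rat.cast_sum, Rat.cast_inv, Rat.cast_natCast] at hH
  push_cast at hH
  rw [show (B:ℝ) + 1 + 1 = B + 2 by ring] at hH
  refine hH.trans (Finset.sum_le_sum fun k _ => ?_)
  rw [Real.rpow_neg (by positivity), ← Real.sqrt_eq_rpow]
  gcongr
  rw [Real.sqrt_le_left (by positivity)]
  nlinarith [(k.cast_nonneg : (0:ℝ) ≤ k)]

lemma rpow_le_sum_range_rpow {s : ℝ} (hs : s ≤ 0) (B : ℕ) :
    ((B:ℝ) + 1) ^ (1 + 2 * s) ≤ ∑ k ∈ range (B + 1), (1 + (k:ℝ) ^ 2) ^ s := by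
  have hterm : ∀ k ∈ range (B + 1), ((B:ℝ) + 1) ^ (2 * s) ≤ (1 + (k:ℝ) ^ 2) ^ s := by
    intro k hk
    have hkB : (k:ℝ) ≤ B := by exact_mod_cast Nat.lt_succ_iff.1 (Finset.mem_range.1 hk)
    rw [Real.rpow_mul (by positivity), Real.rpow_two]
    exact Real.rpow_le_rpow_of_nonpos (by positivity)
      (by nlinarith [(k.cast_nonneg : (0:ℝ) ≤ k)]) hs
  calc ((B:ℝ) + 1) ^ (1 + 2 * s) = ∑ k ∈ range (B + 1), ((B:ℝ) + 1) ^ (2 * s) := by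
        rw [Real.rpow_add (by positivity), Real.rpow_one, Finset.sum_const, Finset.card_range,
          nsmul_eq_mul]
        push_cast
        ring
    _ ≤ _ := Finset.sum_le_sum hterm

noncomputable def decayFactor (s A : ℝ) : ℝ :=
  if s < -(1/2) then 1 else if s = -(1/2) then (Real.log A) ^ ((1:ℝ)/2) else A ^ (1/2 + s)

lemma decayFactor_nonneg (s : ℝ) {A : ℝ} (hA : 1 ≤ A) : 0 ≤ decayFactor s A := by
  unfold decayFactor
  split_ifs
  · exact zero_le_one
  · exact Real.rpow_nonneg (Real.log_nonneg hA) _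
  · exact Real.rpow_nonneg (by linarith) _

lemma decayFactor_sq_le {s A : ℝ} (hs : s < 0) (hA : 2 ≤ A) {B : ℕ} (hAB : A / 4 < B + 1) :
    decayFactor s A ^ 2 ≤ 4 * ∑ k ∈ range (B + 1), (1 + (k:ℝ) ^ 2) ^ s := by
  have hA0 : 0 < A := by linarith
  unfold decayFactor
  split_ifs with h1 h2
  · linarith [one_le_sum_range_rpow s B]
  · subst h2
    -- `(A/4 + 1)^2 - A = (A/4 - 1)^2`
    have hAsq : A ≤ ((B:ℝ) + 2) ^ 2 := by nlinarith
    have hlog : Real.log A ≤ 2 * Real.log (B + 2) := by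
      rw [← Real.log_rpow (by positivity), Real.rpow_two]
      exact Real.log_le_log hA0 hAsq
    rw [← Real.rpow_natCast, ← Real.rpow_mul (Real.log_nonneg (by linarith)),
      show (1:ℝ) / 2 * (2:ℕ) = 1 by norm_num, Real.rpow_one]
    linarith [log_le_sum_range_rpow_neg_half B, Real.log_nonneg (show (1:ℝ) ≤ B + 2 by linarith)]
  · have hθ : 0 ≤ 1 + 2 * s := by linarith [lt_of_le_of_ne (not_lt.1 h1) (Ne.symm h2)]
    have h4 : (4:ℝ) ^ (1 + 2 * s) ≤ 4 := by
      simpa using Real.rpow_le_rpow_of_exponent_le (by norm_num : (1:ℝ) ≤ 4)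
        (show 1 + 2 * s ≤ 1 by linarith)
    calc (A ^ (1/2 + s)) ^ 2 = 4 ^ (1 + 2 * s) * (A / 4) ^ (1 + 2 * s) := by
          rw [← Real.rpow_natCast, ← Real.rpow_mul hA0.le, ← Real.mul_rpow (by norm_num)
            (by positivity)]
          ring_nf
      _ ≤ 4 * ((B:ℝ) + 1) ^ (1 + 2 * s) := by gcongr
      _ ≤ _ := by gcongr; exact rpow_le_sum_range_rpow hs.le B

lemma decayFactor_le_two_mul_sqrt {s A : ℝ} (hs : s < 0) (hA : 2 ≤ A) {B : ℕ}
    (hAB : A / 4 < B + 1) :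
    decayFactor s A ≤ 2 * √(∑ k ∈ range (B + 1), (1 + (k:ℝ) ^ 2) ^ s) := by
  refine (pow_le_pow_iff_left₀ (decayFactor_nonneg s (by linarith)) (by positivity)
    two_ne_zero).1 ?_
  rw [mul_pow, Real.sq_sqrt (by linarith [one_le_sum_range_rpow s B])]
  linarith [decayFactor_sq_le hs hA hAB]

lemma mul_sqrt_sum_le_sqrt_tsum_lowFreq {w a : ℤ → ℝ} (hw : ∀ n, 0 ≤ w n) {N : ℤ}
    {F : Finset ℤ} (hF : ∀ n ∈ F, |n| < N) {K : ℝ} (hK : 0 ≤ K) (ha : ∀ n ∈ F, K ≤ a n) :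
    K * √(∑ n ∈ F, w n) ≤ √(∑' n : ℤ, if |n| < N then w n * a n ^ 2 else 0) := by
  set g : ℤ → ℝ := fun n => if |n| < N then w n * a n ^ 2 else 0
  have hg : ∀ n, 0 ≤ g n := fun n => by
    simp only [g]
    split_ifs
    exacts [mul_nonneg (hw n) (sq_nonneg _), le_rfl]
  have hsum : Summable g := summable_of_ne_finset_zero (s := Ioo (-N) N) fun n hn =>
    if_neg fun h => hn (Finset.mem_Ioo.2 (abs_lt.1 h))
  rw [← Real.sqrt_sq hK, ← Real.sqrt_mul (sq_nonneg K)]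
  refine Real.sqrt_le_sqrt ?_
  calc K ^ 2 * ∑ n ∈ F, w n = ∑ n ∈ F, w n * K ^ 2 := by rw [Finset.mul_sum]; simp only [mul_comm]
    _ ≤ ∑ n ∈ F, g n := Finset.sum_le_sum fun n hn => by
        simp only [g, if_pos (hF n hn)]
        exact mul_le_mul_of_nonneg_left (pow_le_pow_left₀ hK (ha n hn) 2) (hw n)
    _ ≤ ∑' n, g n := hsum.sum_le_tsum _ fun n _ => hg n

/-- Lower bound on the low frequency part of `Ξ_1(t) = it|φ|²φ`, the `k = 1`
term of the power series expansion of the solution of the dispersionless ODE: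
a high-to-low energy transfer, for `s < 0`. -/
theorem Xi_one_lower_bound (s : ℝ) (hs : s < 0) :
    ∃ c : ℝ, 0 < c ∧
      ∀ (A : ℝ) (N : ℕ) (R t : ℝ),
        2 ≤ A → 10 * A ≤ (N:ℝ) → 0 < R → 0 ≤ t →
        c * t * R^3 * A^2 *
            (if s < -(1/2) then 1
             else if s = -(1/2) then (Real.log A) ^ ((1:ℝ)/2)
             else A ^ (1/2 + s))
          ≤ Real.sqrt (∑' n : ℤ,
              if |n| < (N : ℤ) then
                ((1:ℝ) + (n:ℝ)^2) ^ s *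
                  ‖fourierCoeff1 (fun x =>
                    Complex.I * (t : ℂ) * ((‖phiPacket R A (N:ℝ) x‖^2 : ℝ) : ℂ) *
                      phiPacket R A (N:ℝ) x) n‖^2
              else 0) := by
  refine ⟨1/32, by norm_num, fun A N R t hA hN hR ht => ?_⟩
  set B := ⌊A / 4⌋₊
  have hBA : 4 * (B:ℝ) ≤ A := by linarith [Nat.floor_le (show 0 ≤ A / 4 by linarith)]
  have hAB : A / 4 < B + 1 := Nat.lt_floor_add_one _
  have hBN : (B:ℤ) < N := by exact_mod_cast (show (B:ℝ) < N by linarith)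
  have hF : ∀ n ∈ (range (B + 1)).map (Nat.castEmbedding (R := ℤ)), |n| ≤ B := by
    rintro _ hn
    obtain ⟨k, hk, rfl⟩ := Finset.mem_map.1 hn
    rw [Nat.castEmbedding_apply, Nat.abs_cast, Nat.cast_le]
    exact Nat.lt_succ_iff.1 (Finset.mem_range.1 hk)
  refine le_trans ?_ (mul_sqrt_sum_le_sqrt_tsum_lowFreq (fun n => by positivity)
    (fun n hn => (hF n hn).trans_lt hBN) (K := t * R ^ 3 * (B + 1) ^ 2) (by positivity)
    fun n hn => by simpa only [Int.cast_natCast] using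
      le_norm_fourierCoeff1_cubic_phiPacket (N := N) hR.le ht hBA (hF n hn))
  simp only [Finset.sum_map, Nat.castEmbedding_apply, Int.cast_natCast]
  calc _ = t * R ^ 3 * ((A / 4) ^ 2 * (decayFactor s A / 2)) := by unfold decayFactor; ring
    _ ≤ t * R ^ 3 * ((B + 1) ^ 2 * √(∑ k ∈ range (B + 1), (1 + (k:ℝ) ^ 2) ^ s)) := by
      gcongr
      · linarith [decayFactor_nonneg s (by linarith : (1:ℝ) ≤ A)]
      · linarith [decayFactor_le_two_mul_sqrt hs hA hAB]
    _ = _ := by ring
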